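/- Let n ≥ 2, x,y ∈ Bⁿ, and r = max{|x|,|y|}. Then (1/2) ρ_{Bⁿ}(x,y) ≤ k_{Bⁿ}(x,y) ≤ ((1+r)/2) ρ_{Bⁿ}(x,y). -/

import Mathlib

/-
Since `1 - |z|² = (1 - |z|)(1 + |z|)`, the hyperbolic density `2 / (1 - |z|²)` is at most twice
the quasihyperbolic density `1 / (1 - |z|)`, which gives the lower bound. Let
`r = max(|x|, |y|) < R`. The quasihyperbolic density at a point `w` with `|w| ≤ min(|z|, R)` is
at most `(1 + R) / 2` times the hyperbolic density at `z`. A curve from `x` to `y` may leave the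
ball of radius `R`, so we compose it with a `C¹`, `1`-Lipschitz radial map `z ↦ (φ(|z|) / |z|) z`
that fixes the closed ball of radius `r` and takes values in the ball of radius `R`: the
quasihyperbolic length of the image is at most `(1 + R) / 2` times the hyperbolic length of the
curve. Letting `R ↓ r` gives the upper bound.
-/

open Metric Set Real Filter

/-- Conformal-type distance: infimum of weighted lengths of C¹ curves in `D` joining `x` to `y`. -/
noncomputable def confDist {E : Type*} [NormedAddCommGroup E] [NormedSpace ℝ E]
    (ρ : E → ℝ) (D : Set E) (x y : E) : ℝ :=
  sInf { L : ℝ | ∃ γ : ℝ → E, ContDiffOn ℝ 1 γ (Icc 0 1) ∧ γ 0 = x ∧ γ 1 = y ∧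
    (∀ t ∈ Icc (0:ℝ) 1, γ t ∈ D) ∧
    L = ∫ t in (0:ℝ)..1, ρ (γ t) * ‖derivWithin γ (Icc 0 1) t‖ }

/-- Quasihyperbolic distance in `D`, with density `1 / d(z, ∂D)`. -/
noncomputable def qhDist {E : Type*} [NormedAddCommGroup E] [NormedSpace ℝ E]
    (D : Set E) (x y : E) : ℝ :=
  confDist (fun z => (infDist z (frontier D))⁻¹) D x y

/-- Hyperbolic distance in the unit ball, with density `2 / (1 - |z|²)`. -/
noncomputable def hypDist {E : Type*} [NormedAddCommGroup E] [NormedSpace ℝ E]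
    (x y : E) : ℝ :=
  confDist (fun z => 2 / (1 - ‖z‖ ^ 2)) (ball 0 1) x y

open Topology intervalIntegral

section ConformalDistance

variable {E F : Type*} [NormedAddCommGroup E] [NormedSpace ℝ E]
  [NormedAddCommGroup F] [NormedSpace ℝ F]

def IsAdmissibleCurve (D : Set E) (x y : E) (γ : ℝ → E) : Prop :=
  ContDiffOn ℝ 1 γ (Icc 0 1) ∧ γ 0 = x ∧ γ 1 = y ∧ ∀ t ∈ Icc (0 : ℝ) 1, γ t ∈ D

noncomputable def weightedLength (ρ : E → ℝ) (γ : ℝ → E) : ℝ :=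
  ∫ t in (0 : ℝ)..1, ρ (γ t) * ‖derivWithin γ (Icc 0 1) t‖

variable {ρ ρ' : E → ℝ} {D : Set E} {x y : E} {γ : ℝ → E}

theorem isAdmissibleCurve_segment (hD : Convex ℝ D) (hx : x ∈ D) (hy : y ∈ D) :
    IsAdmissibleCurve D x y fun t => x + t • (y - x) :=
  ⟨(contDiff_const.add (contDiff_id.smul contDiff_const)).contDiffOn, by simp, by simp,
    fun _ ht => hD.add_smul_sub_mem hx hy ht⟩

theorem IsAdmissibleCurve.map {D' : Set F} {f : E → F} (hγ : IsAdmissibleCurve D x y γ)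
    (hf : ContDiff ℝ 1 f) (hfD : MapsTo f D D') :
    IsAdmissibleCurve D' (f x) (f y) (f ∘ γ) := by
  obtain ⟨hC, rfl, rfl, hD⟩ := hγ
  exact ⟨hf.comp_contDiffOn hC, rfl, rfl, fun t ht => hfD (hD t ht)⟩

theorem IsAdmissibleCurve.intervalIntegrable (hγ : IsAdmissibleCurve D x y γ)
    (hρ : ContinuousOn ρ D) :
    IntervalIntegrable (fun t => ρ (γ t) * ‖derivWithin γ (Icc 0 1) t‖)
      MeasureTheory.volume 0 1 := by
  obtain ⟨hC, -, -, hD⟩ := hγ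
  refine ContinuousOn.intervalIntegrable_of_Icc zero_le_one ?_
  exact (hρ.comp hC.continuousOn hD).mul
    (hC.continuousOn_derivWithin (uniqueDiffOn_Icc zero_lt_one) le_rfl).norm

theorem weightedLength_nonneg (hρ : ∀ z ∈ D, 0 ≤ ρ z) (hD : ∀ t ∈ Icc (0 : ℝ) 1, γ t ∈ D) :
    0 ≤ weightedLength ρ γ :=
  integral_nonneg zero_le_one fun t ht => mul_nonneg (hρ _ (hD t ht)) (norm_nonneg _)

theorem weightedLength_congr (h : EqOn ρ ρ' D) (hD : ∀ t ∈ Icc (0 : ℝ) 1, γ t ∈ D) :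
    weightedLength ρ γ = weightedLength ρ' γ :=
  integral_congr fun t ht => by
    rw [uIcc_of_le zero_le_one] at ht
    simp only [h (hD t ht)]

theorem weightedLength_comp_le {ρ' : F → ℝ} {D' : Set F} {f : E → F} {c : ℝ}
    (hγ : IsAdmissibleCurve D x y γ) (hf : ContDiff ℝ 1 f) (hfD : MapsTo f D D')
    (hρ : ContinuousOn ρ D) (hρ' : ContinuousOn ρ' D')
    (hcomp : ∀ z ∈ D, ∀ v, ρ' (f z) * ‖fderiv ℝ f z v‖ ≤ c * (ρ z * ‖v‖)) :
    weightedLength ρ' (f ∘ γ) ≤ c * weightedLength ρ γ := by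
  rw [weightedLength, weightedLength, ← integral_const_mul]
  refine integral_mono_on zero_le_one ((hγ.map hf hfD).intervalIntegrable hρ')
    ((hγ.intervalIntegrable hρ).const_mul c) fun t ht => ?_
  rw [fderivWithin_comp_derivWithin t (hf.differentiable one_ne_zero _).differentiableWithinAt
    (hγ.1.differentiableOn one_ne_zero t ht) (mapsTo_univ _ _), fderivWithin_univ]
  exact hcomp _ (hγ.2.2.2 t ht) _

theorem confDist_le_weightedLength (hρ : ∀ z ∈ D, 0 ≤ ρ z) (hγ : IsAdmissibleCurve D x y γ) :
    confDist ρ D x y ≤ weightedLength ρ γ := by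
  obtain ⟨hC, h0, h1, hD⟩ := hγ
  refine csInf_le ⟨0, ?_⟩ ⟨γ, hC, h0, h1, hD, rfl⟩
  rintro _ ⟨γ', -, -, -, hD', rfl⟩
  exact weightedLength_nonneg hρ hD'

theorem le_confDist {c : ℝ} (hne : ∃ γ, IsAdmissibleCurve D x y γ)
    (h : ∀ γ, IsAdmissibleCurve D x y γ → c ≤ weightedLength ρ γ) : c ≤ confDist ρ D x y := by
  obtain ⟨γ, hC, h0, h1, hD⟩ := hne
  refine le_csInf ⟨_, γ, hC, h0, h1, hD, rfl⟩ ?_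
  rintro _ ⟨γ', hC', h0', h1', hD', rfl⟩
  exact h γ' ⟨hC', h0', h1', hD'⟩

theorem confDist_congr (h : EqOn ρ ρ' D) : confDist ρ D x y = confDist ρ' D x y := by
  unfold confDist
  congr 1
  ext L
  constructor <;> rintro ⟨γ, hC, h0, h1, hD, rfl⟩
  exacts [⟨γ, hC, h0, h1, hD, weightedLength_congr h hD⟩,
    ⟨γ, hC, h0, h1, hD, weightedLength_congr h.symm hD⟩]

theorem confDist_map_le_mul {ρ' : F → ℝ} {D' : Set F} {f : E → F} {c : ℝ} (hc : 0 < c)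
    (hf : ContDiff ℝ 1 f) (hfD : MapsTo f D D') (hρ : ContinuousOn ρ D)
    (hρ' : ContinuousOn ρ' D') (hρ'0 : ∀ z ∈ D', 0 ≤ ρ' z)
    (hcomp : ∀ z ∈ D, ∀ v, ρ' (f z) * ‖fderiv ℝ f z v‖ ≤ c * (ρ z * ‖v‖))
    (hne : ∃ γ, IsAdmissibleCurve D x y γ) :
    confDist ρ' D' (f x) (f y) ≤ c * confDist ρ D x y := by
  rw [mul_comm, ← div_le_iff₀ hc]
  refine le_confDist hne fun γ hγ => ?_
  rw [div_le_iff₀ hc, mul_comm]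
  exact (confDist_le_weightedLength hρ'0 (hγ.map hf hfD)).trans
    (weightedLength_comp_le hγ hf hfD hρ hρ' hcomp)

end ConformalDistance

section SoftClamp

noncomputable def softClamp (a e s : ℝ) : ℝ :=
  ∫ t in (0 : ℝ)..s, Real.smoothTransition ((a + e - t) / e)

variable {a e s : ℝ}

theorem hasDerivAt_softClamp (s : ℝ) :
    HasDerivAt (softClamp a e) (Real.smoothTransition ((a + e - s) / e)) s :=
  ((Real.smoothTransition.continuous.comp (by fun_prop)).integral_hasStrictDerivAt 0 s).hasDerivAt

theorem contDiff_softClamp : ContDiff ℝ 1 (softClamp a e) := by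
  rw [contDiff_one_iff_deriv]
  refine ⟨fun s => (hasDerivAt_softClamp s).differentiableAt, ?_⟩
  rw [funext fun s => (hasDerivAt_softClamp (a := a) (e := e) s).deriv]
  exact Real.smoothTransition.continuous.comp (by fun_prop)

theorem lipschitzWith_softClamp : LipschitzWith 1 (softClamp a e) :=
  lipschitzWith_of_nnnorm_deriv_le (fun s => (hasDerivAt_softClamp s).differentiableAt)
    fun s => by
      rw [(hasDerivAt_softClamp s).deriv, ← NNReal.coe_le_coe, coe_nnnorm, Real.norm_eq_abs,
        abs_of_nonneg (Real.smoothTransition.nonneg _)]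
      exact Real.smoothTransition.le_one _

@[simp]
theorem softClamp_zero : softClamp a e 0 = 0 :=
  integral_same

theorem softClamp_eq_self (he : 0 < e) (hs : 0 ≤ s) (hsa : s ≤ a) : softClamp a e s = s := by
  have hone : ∀ t ∈ uIcc 0 s, Real.smoothTransition ((a + e - t) / e) = 1 := fun t ht => by
    rw [uIcc_of_le hs] at ht
    exact Real.smoothTransition.one_of_one_le ((le_div_iff₀ he).2 (by linarith [ht.2]))
  simp [softClamp, integral_congr hone]

theorem softClamp_nonneg (hs : 0 ≤ s) : 0 ≤ softClamp a e s :=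
  integral_nonneg hs fun _ _ => Real.smoothTransition.nonneg _

theorem abs_softClamp_le : |softClamp a e s| ≤ |s| := by
  simpa [Real.dist_eq] using (lipschitzWith_softClamp (a := a) (e := e)).dist_le_mul s 0

theorem softClamp_le_self (hs : 0 ≤ s) : softClamp a e s ≤ s :=
  (le_abs_self _).trans (abs_softClamp_le.trans_eq (abs_of_nonneg hs))

theorem softClamp_le (he : 0 < e) (ha : 0 ≤ a) (hs : 0 ≤ s) : softClamp a e s ≤ a + e := by
  rcases le_total s (a + e) with h | h
  · exact (softClamp_le_self hs).trans h
  have hzero : ∀ t ∈ uIcc (a + e) s, Real.smoothTransition ((a + e - t) / e) = 0 := fun t ht => by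
    rw [uIcc_of_le h] at ht
    exact Real.smoothTransition.zero_of_nonpos
      (div_nonpos_of_nonpos_of_nonneg (by linarith [ht.1]) he.le)
  have hint : ∀ u v : ℝ, IntervalIntegrable (fun t => Real.smoothTransition ((a + e - t) / e))
      MeasureTheory.volume u v := fun u v =>
    (Real.smoothTransition.continuous.comp (by fun_prop)).intervalIntegrable u v
  have hconst : softClamp a e s = softClamp a e (a + e) := by
    simp only [softClamp]
    rw [← integral_add_adjacent_intervals (hint 0 (a + e)) (hint (a + e) s),
      integral_congr hzero, integral_zero, add_zero]
  exact hconst ▸ softClamp_le_self (by linarith)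

end SoftClamp

section RadialMap

variable {E : Type*} [NormedAddCommGroup E] [InnerProductSpace ℝ E]

theorem norm_smul_sub_smul_le_of_norm_eq_one {u w : E} (hu : ‖u‖ = 1) (hw : ‖w‖ = 1)
    {p q α β : ℝ} (hpq : |p - q| ≤ |α - β|) (hmul : p * q ≤ α * β) :
    ‖p • u - q • w‖ ≤ ‖α • u - β • w‖ := by
  have hsq : ∀ a b : ℝ, ‖a • u - b • w‖ ^ 2 = a ^ 2 + b ^ 2 - 2 * (a * b) * inner ℝ u w :=
    fun a b => by
      rw [norm_sub_sq_real, norm_smul, norm_smul, real_inner_smul_left, real_inner_smul_right,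
        hu, hw, Real.norm_eq_abs, Real.norm_eq_abs]
      simp only [mul_one, sq_abs]
      ring
  have hinner : inner ℝ u w ≤ 1 := (real_inner_le_norm u w).trans (by rw [hu, hw, one_mul])
  have hpq_sq : (p - q) ^ 2 ≤ (α - β) ^ 2 := sq_le_sq.2 hpq
  rw [← pow_le_pow_iff_left₀ (norm_nonneg _) (norm_nonneg _) two_ne_zero, hsq, hsq]
  nlinarith [mul_nonneg (sub_nonneg.2 hmul) (sub_nonneg.2 hinner)]

noncomputable def radialMap (φ : ℝ → ℝ) (z : E) : E := (φ ‖z‖ / ‖z‖) • z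

variable {φ : ℝ → ℝ}

@[simp]
theorem radialMap_zero : radialMap φ (0 : E) = 0 := by
  simp [radialMap]

theorem radialMap_eq_smul (z : E) : radialMap φ z = φ ‖z‖ • (‖z‖⁻¹ • z) := by
  rw [radialMap, smul_smul, div_eq_mul_inv]

theorem norm_radialMap (h0 : φ 0 = 0) (z : E) : ‖radialMap φ z‖ = |φ ‖z‖| := by
  rcases eq_or_ne z 0 with rfl | hz
  · simp [h0]
  · simp [radialMap_eq_smul, norm_smul, hz]

theorem radialMap_of_eq {z : E} (h : φ ‖z‖ = ‖z‖) : radialMap φ z = z := by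
  rcases eq_or_ne z 0 with rfl | hz
  · exact radialMap_zero
  · rw [radialMap, h, div_self (norm_ne_zero_iff.2 hz), one_smul]

theorem contDiff_radialMap {n : WithTop ℕ∞} {a : ℝ} (hφ : ContDiff ℝ n φ) (ha : 0 < a)
    (hid : ∀ s ∈ Icc 0 a, φ s = s) : ContDiff ℝ n (radialMap φ : E → E) := by
  refine contDiff_iff_contDiffAt.2 fun z => ?_
  rcases lt_or_ge ‖z‖ a with hz | hz
  · have hball : ball (0 : E) a ∈ 𝓝 z := isOpen_ball.mem_nhds (mem_ball_zero_iff.2 hz)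
    refine contDiffAt_id.congr_of_eventuallyEq (mem_of_superset hball fun w hw => ?_)
    exact radialMap_of_eq (hid _ ⟨norm_nonneg w, (mem_ball_zero_iff.1 hw).le⟩)
  · have hz0 : z ≠ 0 := norm_pos_iff.1 (ha.trans_le hz)
    have hnorm : ContDiffAt ℝ n norm z := contDiffAt_norm ℝ hz0
    exact ((hφ.contDiffAt.comp z hnorm).div hnorm (norm_ne_zero_iff.2 hz0)).smul contDiffAt_id

theorem lipschitzWith_radialMap (hφ : LipschitzWith 1 φ) (h0 : φ 0 = 0) :
    LipschitzWith 1 (radialMap φ : E → E) := by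
  have habs : ∀ s, |φ s| ≤ |s| := fun s => by simpa [Real.dist_eq, h0] using hφ.dist_le_mul s 0
  refine LipschitzWith.of_dist_le_mul fun a b => ?_
  rw [NNReal.coe_one, one_mul, dist_eq_norm, dist_eq_norm]
  rcases eq_or_ne a 0 with rfl | ha
  · simpa [norm_radialMap h0] using habs ‖b‖
  rcases eq_or_ne b 0 with rfl | hb
  · simpa [norm_radialMap h0] using habs ‖a‖
  have hpq : |φ ‖a‖ - φ ‖b‖| ≤ |‖a‖ - ‖b‖| := by
    simpa [Real.dist_eq] using hφ.dist_le_mul ‖a‖ ‖b‖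
  have hmul : φ ‖a‖ * φ ‖b‖ ≤ ‖a‖ * ‖b‖ := by
    simpa only [abs_norm] using (le_abs_self _).trans ((abs_mul _ _).trans_le
      (mul_le_mul (habs ‖a‖) (habs ‖b‖) (abs_nonneg _) (abs_nonneg _)))
  calc ‖radialMap φ a - radialMap φ b‖
      ≤ ‖‖a‖ • (‖a‖⁻¹ • a) - ‖b‖ • (‖b‖⁻¹ • b)‖ := by
        rw [radialMap_eq_smul, radialMap_eq_smul]
        exact norm_smul_sub_smul_le_of_norm_eq_one (by simp [norm_smul, ha])
          (by simp [norm_smul, hb]) hpq hmul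
    _ = ‖a - b‖ := by
        rw [smul_inv_smul₀ (norm_ne_zero_iff.2 ha), smul_inv_smul₀ (norm_ne_zero_iff.2 hb)]

end RadialMap

section UnitBall

theorem two_div_one_sub_sq_le {t : ℝ} (ht0 : 0 ≤ t) (ht1 : t < 1) :
    2 / (1 - t ^ 2) ≤ 2 * (1 - t)⁻¹ := by
  rw [← div_eq_mul_inv]
  exact div_le_div_of_nonneg_left zero_le_two (by linarith) (by nlinarith)

theorem inv_one_sub_le {u t R : ℝ} (hu : 0 ≤ u) (hut : u ≤ t) (huR : u ≤ R) (ht : t < 1) :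
    (1 - u)⁻¹ ≤ (1 + R) / 2 * (2 / (1 - t ^ 2)) := by
  have ht2 : 0 < 1 - t ^ 2 := by nlinarith
  rw [show (1 + R) / 2 * (2 / (1 - t ^ 2)) = (1 + R) / (1 - t ^ 2) by field_simp,
    inv_eq_one_div, div_le_div_iff₀ (by linarith) ht2]
  nlinarith

variable {E : Type*} [NormedAddCommGroup E]

theorem continuousOn_inv_one_sub_norm : ContinuousOn (fun z : E => (1 - ‖z‖)⁻¹) (ball 0 1) :=
  (continuous_const.sub continuous_norm).continuousOn.inv₀ fun _ hz =>
    (sub_pos.2 (mem_ball_zero_iff.1 hz)).ne'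

theorem continuousOn_two_div_one_sub_norm_sq :
    ContinuousOn (fun z : E => 2 / (1 - ‖z‖ ^ 2)) (ball 0 1) :=
  continuousOn_const.div (by fun_prop) fun z hz => by
    have := mem_ball_zero_iff.1 hz
    nlinarith [norm_nonneg z]

variable [NormedSpace ℝ E] {x y : E}

theorem infDist_sphere_zero [Nontrivial E] {R : ℝ} {z : E} (hz : ‖z‖ ≤ R) :
    infDist z (sphere 0 R) = R - ‖z‖ := by
  obtain ⟨u, hu, hzu⟩ : ∃ u : E, ‖u‖ = 1 ∧ ‖z‖ • u = z := by
    rcases eq_or_ne z 0 with rfl | hz0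
    · obtain ⟨u, hu⟩ := exists_norm_eq E zero_le_one
      exact ⟨u, hu, by simp⟩
    · exact ⟨‖z‖⁻¹ • z, by simp [norm_smul, hz0], smul_inv_smul₀ (norm_ne_zero_iff.2 hz0) z⟩
  have hRu : R • u ∈ sphere (0 : E) R := by
    simp [norm_smul, hu, abs_of_nonneg ((norm_nonneg z).trans hz)]
  refine le_antisymm ((infDist_le_dist_of_mem hRu).trans_eq ?_)
    ((le_infDist ⟨_, hRu⟩).2 fun w hw => ?_)
  · rw [dist_eq_norm, ← hzu, ← sub_smul, norm_smul, hu, mul_one, norm_smul, hu, mul_one,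
      Real.norm_eq_abs, abs_of_nonpos (by linarith), norm_norm, neg_sub]
  · rw [mem_sphere_zero_iff_norm] at hw
    rw [dist_comm, dist_eq_norm]
    linarith [norm_sub_norm_le w z]

theorem qhDist_unitBall [Nontrivial E] :
    qhDist (ball (0 : E) 1) x y = confDist (fun z => (1 - ‖z‖)⁻¹) (ball 0 1) x y :=
  confDist_congr fun z hz => by
    rw [frontier_ball 0 one_ne_zero, infDist_sphere_zero (mem_ball_zero_iff.1 hz).le]

theorem hypDist_le_two_mul_qhDist [Nontrivial E] (hx : x ∈ ball (0 : E) 1)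
    (hy : y ∈ ball (0 : E) 1) : hypDist x y ≤ 2 * qhDist (ball (0 : E) 1) x y := by
  rw [qhDist_unitBall]
  refine confDist_map_le_mul (f := id) two_pos contDiff_id (mapsTo_id _)
    continuousOn_inv_one_sub_norm continuousOn_two_div_one_sub_norm_sq
    (fun z hz => div_nonneg zero_le_two (by nlinarith [norm_nonneg z, mem_ball_zero_iff.1 hz]))
    (fun z hz v => ?_) ⟨_, isAdmissibleCurve_segment (convex_ball 0 1) hx hy⟩
  rw [fderiv_id, ContinuousLinearMap.id_apply, id, ← mul_assoc]
  exact mul_le_mul_of_nonneg_right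
    (two_div_one_sub_sq_le (norm_nonneg z) (mem_ball_zero_iff.1 hz)) (norm_nonneg v)

end UnitBall

section Comparison

variable {E : Type*} [NormedAddCommGroup E] [InnerProductSpace ℝ E] {x y : E}

theorem exists_contDiff_lipschitz_clamp {r R : ℝ} (hr : 0 ≤ r) (hrR : r < R) :
    ∃ f : E → E, ContDiff ℝ 1 f ∧ LipschitzWith 1 f ∧ (∀ z, ‖z‖ ≤ r → f z = z) ∧
      ∀ z, ‖f z‖ ≤ ‖z‖ ∧ ‖f z‖ ≤ R := by
  set φ := softClamp ((r + R) / 2) ((R - r) / 2)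
  have he : 0 < (R - r) / 2 := by linarith
  have hnorm : ∀ z : E, ‖radialMap φ z‖ = φ ‖z‖ := fun z => by
    rw [norm_radialMap softClamp_zero, abs_of_nonneg (softClamp_nonneg (norm_nonneg z))]
  refine ⟨radialMap φ, contDiff_radialMap contDiff_softClamp (by linarith : 0 < (r + R) / 2)
    (fun s hs => softClamp_eq_self he hs.1 hs.2), lipschitzWith_radialMap lipschitzWith_softClamp
    softClamp_zero, fun z hz => radialMap_of_eq (softClamp_eq_self he (norm_nonneg z)
    (by linarith)), fun z => ⟨?_, ?_⟩⟩
  · rw [hnorm]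
    exact softClamp_le_self (norm_nonneg z)
  · rw [hnorm]
    linarith [softClamp_le he (by linarith : 0 ≤ (r + R) / 2) (norm_nonneg z)]

theorem qhDist_le_mul_hypDist_of_lt [Nontrivial E] (hx : x ∈ ball (0 : E) 1)
    (hy : y ∈ ball (0 : E) 1) {R : ℝ} (hR : max ‖x‖ ‖y‖ < R) :
    qhDist (ball (0 : E) 1) x y ≤ (1 + R) / 2 * hypDist x y := by
  have hr : 0 ≤ max ‖x‖ ‖y‖ := (norm_nonneg x).trans (le_max_left _ _)
  obtain ⟨f, hf, hlip, hfix, hfnorm⟩ := exists_contDiff_lipschitz_clamp (E := E) hr hR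
  have hmaps : MapsTo f (ball 0 1) (ball 0 1) := fun z hz => by
    rw [mem_ball_zero_iff] at hz ⊢
    exact (hfnorm z).1.trans_lt hz
  have hcomp : ∀ z ∈ ball (0 : E) 1, ∀ v, (1 - ‖f z‖)⁻¹ * ‖fderiv ℝ f z v‖ ≤
      (1 + R) / 2 * (2 / (1 - ‖z‖ ^ 2) * ‖v‖) := fun z hz v => by
    have hfz := mem_ball_zero_iff.1 (hmaps hz)
    have hDv : ‖fderiv ℝ f z v‖ ≤ ‖v‖ := by
      simpa using (fderiv ℝ f z).le_of_opNorm_le (norm_fderiv_le_of_lipschitz ℝ hlip) v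
    calc (1 - ‖f z‖)⁻¹ * ‖fderiv ℝ f z v‖ ≤ (1 - ‖f z‖)⁻¹ * ‖v‖ :=
          mul_le_mul_of_nonneg_left hDv (inv_nonneg.2 (by linarith))
      _ ≤ (1 + R) / 2 * (2 / (1 - ‖z‖ ^ 2)) * ‖v‖ :=
          mul_le_mul_of_nonneg_right (inv_one_sub_le (norm_nonneg _) (hfnorm z).1 (hfnorm z).2
            (mem_ball_zero_iff.1 hz)) (norm_nonneg v)
      _ = _ := mul_assoc _ _ _
  have h := confDist_map_le_mul (by linarith) hf
    hmaps continuousOn_two_div_one_sub_norm_sq continuousOn_inv_one_sub_norm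
    (fun _ hz => inv_nonneg.2 (sub_nonneg.2 (mem_ball_zero_iff.1 hz).le)) hcomp
    ⟨_, isAdmissibleCurve_segment (convex_ball 0 1) hx hy⟩
  rwa [hfix x (le_max_left _ _), hfix y (le_max_right _ _), ← qhDist_unitBall] at h

theorem qhDist_le_mul_hypDist [Nontrivial E] (hx : x ∈ ball (0 : E) 1)
    (hy : y ∈ ball (0 : E) 1) :
    qhDist (ball (0 : E) 1) x y ≤ (1 + max ‖x‖ ‖y‖) / 2 * hypDist x y := by
  refine ge_of_tendsto (x := 𝓝[>] max ‖x‖ ‖y‖) (f := fun R => (1 + R) / 2 * hypDist x y)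
    ((Continuous.tendsto (by fun_prop) _).mono_left nhdsWithin_le_nhds) ?_
  filter_upwards [self_mem_nhdsWithin] with R hR using qhDist_le_mul_hypDist_of_lt hx hy hR

end Comparison

/-- For `x, y` in the unit ball and `r = max(|x|,|y|)`,
`ρ(x,y)/2 ≤ k(x,y) ≤ (1+r) ρ(x,y) / 2`. -/
theorem qhDist_hypDist_comparison {n : ℕ} (hn : 2 ≤ n)
    (x y : EuclideanSpace ℝ (Fin n))
    (hx : x ∈ ball (0 : EuclideanSpace ℝ (Fin n)) 1)
    (hy : y ∈ ball (0 : EuclideanSpace ℝ (Fin n)) 1) :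
    (1 / 2) * hypDist x y ≤ qhDist (ball (0 : EuclideanSpace ℝ (Fin n)) 1) x y ∧
    qhDist (ball (0 : EuclideanSpace ℝ (Fin n)) 1) x y ≤
      ((1 + max ‖x‖ ‖y‖) / 2) * hypDist x y := by
  have : NeZero n := ⟨by omega⟩
  exact ⟨by linarith [hypDist_le_two_mul_qhDist hx hy], qhDist_le_mul_hypDist hx hy⟩
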